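/- Let C, C₁, C₂, … be Archimedean copulas with (normalized, right-continuous at 0) generators φ, φ₁, φ₂, … such that (φ_n) converges pointwise to φ on (0,1]. Then for every x ∈ Cont(D⁺φ) and every y ∈ [f^0(x), 1] with C(x,y) ∈ Cont(D⁺φ) one has lim_{n→∞} K_{C_n}(x,[0,y]) = K_C(x,[0,y]); that is, lim_{n→∞} D⁺φ_n(x)/D⁺φ_n(C_n(x,y)) = D⁺φ(x)/D⁺φ(C(x,y)). Moreover, for every x ∈ (0,1) the set U_x = {y ∈ [f^0(x),1] : C(x,y) ∈ Cont(D⁺φ)} has full Lebesgue measure in, and is dense in, [f^0(x),1]. -/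

import Mathlib

open MeasureTheory Filter Set
open scoped ENNReal

noncomputable section

/-- Right-hand derivative (of a convex function on `[0,1]`) of `f` at `x`, realized as the
infimum of the forward difference quotients with right endpoint in `(x, 1]`. -/
noncomputable def rightD (f : ℝ → ℝ) (x : ℝ) : ℝ :=
  sInf ((fun y => (f y - f x) / (y - x)) '' Set.Ioc x 1)

/-- `φ : [0,1] → [0,∞]` is a (normalized, right-continuous at `0`) generator of an
Archimedean copula: convex, strictly decreasing, `φ 1 = 0`, finite on `(0,1]`,
right-continuous at `0` and normalized by `φ (1/2) = 1`. -/
structure IsGenerator (φ : ℝ → ℝ≥0∞) : Prop where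
  convex : ∀ x ∈ Set.Icc (0:ℝ) 1, ∀ y ∈ Set.Icc (0:ℝ) 1, ∀ t ∈ Set.Icc (0:ℝ) 1,
    φ (t * x + (1 - t) * y) ≤ ENNReal.ofReal t * φ x + ENNReal.ofReal (1 - t) * φ y
  strict_anti : ∀ x ∈ Set.Icc (0:ℝ) 1, ∀ y ∈ Set.Icc (0:ℝ) 1, x < y → φ y < φ x
  map_one : φ 1 = 0
  finite : ∀ x ∈ Set.Ioc (0:ℝ) 1, φ x < ⊤
  rightCont_zero : Filter.Tendsto φ (nhdsWithin 0 (Set.Ioi 0)) (nhds (φ 0))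
  normalized : φ (1/2) = 1

/-- Pseudo-inverse `φ⁻` of a generator: `φ⁻ s = φ⁻¹ s` for `s < φ 0` and `0` for `s ≥ φ 0`. -/
noncomputable def pseudoInv (φ : ℝ → ℝ≥0∞) (s : ℝ≥0∞) : ℝ :=
  sSup {x | x ∈ Set.Icc (0:ℝ) 1 ∧ s ≤ φ x}

/-- The Archimedean copula generated by `φ`: `C(x,y) = φ⁻(φ x + φ y)`. -/
noncomputable def archCopula (φ : ℝ → ℝ≥0∞) (x y : ℝ) : ℝ :=
  pseudoInv φ (φ x + φ y)

/-- The right-hand derivative `D⁺φ` of a generator. -/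
noncomputable def Dplus (φ : ℝ → ℝ≥0∞) (x : ℝ) : ℝ :=
  rightD (fun t => (φ t).toReal) x

/-- The set `Cont(D⁺φ)` of continuity points of `D⁺φ` in `(0,1)`. -/
def ContD (φ : ℝ → ℝ≥0∞) : Set ℝ :=
  {x | x ∈ Set.Ioo (0:ℝ) 1 ∧ ContinuousAt (Dplus φ) x}

/-- The `t`-level function `f^t(x) = φ⁻(φ t − φ x)` of the Archimedean copula generated
by `φ`. -/
noncomputable def levelFn (φ : ℝ → ℝ≥0∞) (t x : ℝ) : ℝ :=
  pseudoInv φ (φ t - φ x)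

/-- The Kendall distribution function `F^Kendall(x) = x − φ(x)/D⁺φ(x)` of the Archimedean
copula generated by `φ`. -/
noncomputable def kendall (φ : ℝ → ℝ≥0∞) (x : ℝ) : ℝ :=
  x - (φ x).toReal / Dplus φ x

/-- The Markov kernel (as conditional distribution function `(x,y) ↦ K_C(x,[0,y])`) of the
Archimedean copula generated by `φ`. -/
noncomputable def archKernel (φ : ℝ → ℝ≥0∞) (x y : ℝ) : ℝ :=
  if x = 0 ∨ x = 1 then 1
  else if y < levelFn φ 0 x then 0
  else Dplus φ x / Dplus φ (archCopula φ x y)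

/-- The metric `D₁` between two copulas, expressed via their conditional distribution
functions `K₁, K₂` (with `Kᵢ x y = K_{Cᵢ}(x,[0,y])`). -/
noncomputable def D1 (K1 K2 : ℝ → ℝ → ℝ) : ℝ :=
  ∫ y in Set.Icc (0:ℝ) 1, ∫ x in Set.Icc (0:ℝ) 1, |K1 x y - K2 x y|

/-- Conditional distribution function of the independence copula `Π`. -/
def piKernel : ℝ → ℝ → ℝ := fun _ y => y

/-- Dependence measure `ζ₁(C) = 3 D₁(C, Π)`. -/
noncomputable def zeta1 (K : ℝ → ℝ → ℝ) : ℝ := 3 * D1 K piKernel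

/-- Dependence measure `r(C) = 6 ∫∫ K_C(x,[0,y])² dλ(x) dλ(y) − 2`. -/
noncomputable def rdep (K : ℝ → ℝ → ℝ) : ℝ :=
  6 * (∫ y in Set.Icc (0:ℝ) 1, ∫ x in Set.Icc (0:ℝ) 1, (K x y) ^ 2) - 2

/-- Weak conditional convergence of a sequence of copulas, in terms of their conditional
distribution functions: for λ-a.e. `x ∈ [0,1]` the measures `K_{C_n}(x,·)` converge weakly
to `K_C(x,·)`, i.e. the conditional distribution functions converge at every continuity
point of `y ↦ K_C(x,[0,y])` in `[0,1]`. -/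
def WeakCondConv (Kseq : ℕ → ℝ → ℝ → ℝ) (K : ℝ → ℝ → ℝ) : Prop :=
  ∀ᵐ x ∂(volume.restrict (Set.Icc (0:ℝ) 1)),
    ∀ y ∈ Set.Icc (0:ℝ) 1, ContinuousWithinAt (fun t => K x t) (Set.Icc 0 1) y →
      Filter.Tendsto (fun n => Kseq n x y) Filter.atTop (nhds (K x y))

/-! `D⁺φ` is the infimum of the difference quotients of the convex function `φ`, and difference
quotients with fixed endpoints converge when the generators converge pointwise. Squeezing
`D⁺φₙ(tₙ)` between difference quotients with endpoints on either side of `c` therefore gives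
`D⁺φₙ(tₙ) → D⁺φ(c)` whenever `tₙ → c` and `D⁺φ` is continuous at `c`. Pseudo-inverses converge at
values they send into `(0,1)`, so `Cₙ(x,y) → C(x,y)`, and the kernels converge.

For the second part, `D⁺φ` is monotone and so has only countably many discontinuities, while
`y ↦ C(x,y)` is injective where `C(x,y) ∈ (0,1)`, because there `φ(C(x,y)) = φ(x) + φ(y)`.
Hence `[f⁰(x),1] \ U_x` is countable. -/

open Topology

section RightD

variable {f : ℝ → ℝ} {w x y b : ℝ}

lemma exists_slope_lt_of_rightD_lt (hx : x < 1) (hb : rightD f x < b) :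
    ∃ y ∈ Ioc x 1, (f y - f x) / (y - x) < b := by
  obtain ⟨_, ⟨y, hy, rfl⟩, hlt⟩ := exists_lt_of_csInf_lt ((nonempty_Ioc.2 hx).image _) hb
  exact ⟨y, hy, hlt⟩

namespace ConvexOn

lemma slope_le_slope_of_Ioc (hf : ConvexOn ℝ (Ioc 0 1) f) (hw : 0 < w) (hwx : w < x) (hxy : x < y)
    (hy : y ≤ 1) :
    (f x - f w) / (x - w) ≤ (f y - f x) / (y - x) :=
  hf.slope_mono_adjacent ⟨hw, by linarith⟩ ⟨by linarith, hy⟩ hwx hxy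

lemma rightD_le_slope (hf : ConvexOn ℝ (Ioc 0 1) f) (hx : x ∈ Ioo 0 1) (hy : y ∈ Ioc x 1) :
    rightD f x ≤ (f y - f x) / (y - x) := by
  refine csInf_le ⟨(f x - f (x / 2)) / (x - x / 2), ?_⟩ ⟨y, hy, rfl⟩
  rintro _ ⟨z, hz, rfl⟩
  exact hf.slope_le_slope_of_Ioc (by linarith [hx.1]) (by linarith [hx.1]) hz.1 hz.2

lemma slope_le_rightD (hf : ConvexOn ℝ (Ioc 0 1) f) (hw : 0 < w) (hwx : w < x) (hx : x < 1) :
    (f x - f w) / (x - w) ≤ rightD f x := by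
  refine le_csInf ⟨_, 1, ⟨hx, le_rfl⟩, rfl⟩ ?_
  rintro _ ⟨y, hy, rfl⟩
  exact hf.slope_le_slope_of_Ioc hw hwx hy.1 hy.2

lemma monotoneOn_rightD (hf : ConvexOn ℝ (Ioc 0 1) f) : MonotoneOn (rightD f) (Ioo 0 1) := by
  intro x hx y hy hxy
  rcases hxy.eq_or_lt with rfl | hlt
  · rfl
  calc rightD f x ≤ (f y - f x) / (y - x) := hf.rightD_le_slope hx ⟨hlt, hy.2.le⟩
    _ ≤ rightD f y := hf.slope_le_rightD hx.1 hlt hy.2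

end ConvexOn

theorem tendsto_rightD_of_tendsto {fs : ℕ → ℝ → ℝ} (hfs : ∀ n, ConvexOn ℝ (Ioc 0 1) (fs n))
    (hf : ConvexOn ℝ (Ioc 0 1) f)
    (hconv : ∀ u ∈ Ioc (0 : ℝ) 1, Tendsto (fun n => fs n u) atTop (𝓝 (f u)))
    {c : ℝ} (hc : c ∈ Ioo 0 1) (hcont : ContinuousAt (rightD f) c)
    {t : ℕ → ℝ} (ht : Tendsto t atTop (𝓝 c)) :
    Tendsto (fun n => rightD (fs n) (t n)) atTop (𝓝 (rightD f c)) := by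
  have hslope : ∀ u ∈ Ioc (0 : ℝ) 1, ∀ v ∈ Ioc (0 : ℝ) 1,
      Tendsto (fun n => (fs n v - fs n u) / (v - u)) atTop (𝓝 ((f v - f u) / (v - u))) :=
    fun u hu v hv => ((hconv v hv).sub (hconv u hu)).div_const _
  have htIoo : ∀ᶠ n in atTop, t n ∈ Ioo 0 1 := ht.eventually (isOpen_Ioo.mem_nhds hc)
  rw [tendsto_order]
  constructor
  · intro b hb
    obtain ⟨a, hac, hba, ha⟩ :=
      ((hcont.eventually_const_lt hb).and (isOpen_Ioo.mem_nhds hc)).exists_lt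
    obtain ⟨u, hau, huc⟩ := exists_between hac
    have hu : u ∈ Ioo 0 1 := ⟨ha.1.trans hau, huc.trans hc.2⟩
    have hbu : b < (f u - f a) / (u - a) :=
      hba.trans_le (hf.rightD_le_slope ha ⟨hau, hu.2.le⟩)
    filter_upwards [(hslope a ⟨ha.1, ha.2.le⟩ u ⟨hu.1, hu.2.le⟩).eventually_const_lt hbu,
      ht.eventually_const_lt huc, htIoo] with n hn hun htn
    calc b < (fs n u - fs n a) / (u - a) := hn
      _ ≤ rightD (fs n) u := (hfs n).slope_le_rightD ha.1 hau hu.2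
      _ ≤ rightD (fs n) (t n) := (hfs n).monotoneOn_rightD hu htn hun.le
  · intro b hb
    obtain ⟨β, hcβ, hβb, hβ⟩ :=
      ((hcont.eventually_lt_const hb).and (isOpen_Ioo.mem_nhds hc)).exists_gt
    obtain ⟨v, hv, hvb⟩ := exists_slope_lt_of_rightD_lt hβ.2 hβb
    filter_upwards [(hslope β ⟨hβ.1, hβ.2.le⟩ v ⟨hβ.1.trans hv.1, hv.2⟩).eventually_lt_const hvb,
      ht.eventually_lt_const hcβ, htIoo] with n hn htβ htn
    calc rightD (fs n) (t n) ≤ rightD (fs n) β := (hfs n).monotoneOn_rightD htn hβ htβ.le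
      _ ≤ (fs n v - fs n β) / (v - β) := (hfs n).rightD_le_slope hβ hv
      _ < b := hn

end RightD

section PseudoInv

variable {φ : ℝ → ℝ≥0∞} {s : ℝ≥0∞} {b z : ℝ}

lemma pseudoInv_nonneg : 0 ≤ pseudoInv φ s :=
  Real.sSup_nonneg fun _ hz => hz.1.1

lemma pseudoInv_le_of_forall (h : ∀ z ∈ Icc (0 : ℝ) 1, s ≤ φ z → z ≤ b) (hb : 0 ≤ b) :
    pseudoInv φ s ≤ b :=
  Real.sSup_le (fun z hz => h z hz.1 hz.2) hb

lemma le_pseudoInv (hz : z ∈ Icc (0 : ℝ) 1) (h : s ≤ φ z) : z ≤ pseudoInv φ s :=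
  le_csSup ⟨1, fun _ hw => hw.1.2⟩ ⟨hz, h⟩

lemma apply_lt_of_pseudoInv_lt (hz : z ∈ Icc (0 : ℝ) 1) (h : pseudoInv φ s < z) : φ z < s :=
  lt_of_not_ge fun hle => (le_pseudoInv hz hle).not_gt h

end PseudoInv

namespace IsGenerator

variable {φ : ℝ → ℝ≥0∞} {s : ℝ≥0∞} {x y z : ℝ}

lemma strictAntiOn (hφ : IsGenerator φ) : StrictAntiOn φ (Icc 0 1) :=
  fun x hx y hy hxy => hφ.strict_anti x hx y hy hxy

lemma ne_top (hφ : IsGenerator φ) (hx : x ∈ Ioc 0 1) : φ x ≠ ⊤ :=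
  (hφ.finite x hx).ne

lemma convexOn_toReal (hφ : IsGenerator φ) : ConvexOn ℝ (Ioc 0 1) fun t => (φ t).toReal := by
  refine ⟨convex_Ioc 0 1, fun x hx y hy a b ha hb hab => ?_⟩
  obtain rfl : b = 1 - a := by linarith
  have hxt := ENNReal.mul_ne_top ENNReal.ofReal_ne_top (hφ.ne_top hx) (a := ENNReal.ofReal a)
  have hyt := ENNReal.mul_ne_top ENNReal.ofReal_ne_top (hφ.ne_top hy) (a := ENNReal.ofReal (1 - a))
  have hconv := ENNReal.toReal_mono (ENNReal.add_ne_top.2 ⟨hxt, hyt⟩)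
    (hφ.convex x (Ioc_subset_Icc_self hx) y (Ioc_subset_Icc_self hy) a ⟨ha, by linarith⟩)
  rwa [ENNReal.toReal_add hxt hyt, ENNReal.toReal_mul, ENNReal.toReal_mul,
    ENNReal.toReal_ofReal ha, ENNReal.toReal_ofReal hb] at hconv

lemma continuousOn (hφ : IsGenerator φ) : ContinuousOn φ (Ioo 0 1) := by
  have hreal : ContinuousOn (fun t => (φ t).toReal) (Ioo 0 1) :=
    (hφ.convexOn_toReal.subset Ioo_subset_Ioc_self (convex_Ioo 0 1)).continuousOn isOpen_Ioo
  exact (ENNReal.continuous_ofReal.comp_continuousOn hreal).congr fun t ht =>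
    (ENNReal.ofReal_toReal (hφ.ne_top (Ioo_subset_Ioc_self ht))).symm

lemma Dplus_neg (hφ : IsGenerator φ) (hx : x ∈ Ioo 0 1) : Dplus φ x < 0 := by
  have hφx : 0 < (φ x).toReal := ENNReal.toReal_pos
    (hφ.map_one ▸ hφ.strictAntiOn (Ioo_subset_Icc_self hx) ⟨zero_le_one, le_rfl⟩ hx.2).ne'
    (hφ.ne_top (Ioo_subset_Ioc_self hx))
  refine (hφ.convexOn_toReal.rightD_le_slope hx ⟨hx.2, le_rfl⟩).trans_lt
    (div_neg_of_neg_of_pos ?_ (by linarith [hx.2]))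
  simp only [hφ.map_one, ENNReal.toReal_zero]
  linarith

lemma countable_Ioo_diff_ContD (hφ : IsGenerator φ) : (Ioo 0 1 \ ContD φ).Countable := by
  refine hφ.convexOn_toReal.monotoneOn_rightD.countable_not_continuousWithinAt.mono ?_
  rintro t ⟨ht, htc⟩
  exact ⟨ht, fun h => htc ⟨ht, h.continuousAt (isOpen_Ioo.mem_nhds ht)⟩⟩

lemma le_apply_of_lt_pseudoInv (hφ : IsGenerator φ) (hz0 : 0 ≤ z) (hz : z < pseudoInv φ s) :
    s ≤ φ z := by
  have hne : {x | x ∈ Icc (0 : ℝ) 1 ∧ s ≤ φ x}.Nonempty := by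
    by_contra h
    rw [not_nonempty_iff_eq_empty] at h
    rw [pseudoInv, h, Real.sSup_empty] at hz
    exact hz.not_ge hz0
  obtain ⟨w, hw, hzw⟩ := exists_lt_of_lt_csSup hne hz
  exact hw.2.trans (hφ.strictAntiOn ⟨hz0, hzw.le.trans hw.1.2⟩ hw.1 hzw).le

lemma apply_pseudoInv (hφ : IsGenerator φ) (hc : pseudoInv φ s ∈ Ioo 0 1) :
    φ (pseudoInv φ s) = s := by
  set c := pseudoInv φ s
  have hφc : Tendsto φ (𝓝 c) (𝓝 (φ c)) := hφ.continuousOn.continuousAt (isOpen_Ioo.mem_nhds hc)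
  refine le_antisymm (le_of_tendsto (hφc.mono_left (nhdsWithin_le_nhds (s := Ioi c))) ?_)
    (ge_of_tendsto (hφc.mono_left (nhdsWithin_le_nhds (s := Iio c))) ?_)
  · filter_upwards [Ioo_mem_nhdsGT hc.2] with z hz
    exact (apply_lt_of_pseudoInv_lt ⟨(hc.1.trans hz.1).le, hz.2.le⟩ hz.1).le
  · filter_upwards [Ioo_mem_nhdsLT hc.1] with z hz
    exact hφ.le_apply_of_lt_pseudoInv hz.1.le hz.2

lemma pseudoInv_lt_one (hφ : IsGenerator φ) (hs : 0 < s) : pseudoInv φ s < 1 := by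
  obtain ⟨r, -, hr0, hrs⟩ := ENNReal.lt_iff_exists_real_btwn.1 hs
  obtain ⟨t, ht0, ht1, hts⟩ : ∃ t : ℝ, 0 < t ∧ t ≤ 1 ∧ ENNReal.ofReal t < s :=
    ⟨min r 1, lt_min (ENNReal.ofReal_pos.1 hr0) one_pos, min_le_right r 1,
      (ENNReal.ofReal_le_ofReal (min_le_left r 1)).trans_lt hrs⟩
  have hφt : φ (1 - t / 2) < s := by
    have h := hφ.convex (1 / 2) ⟨by norm_num, by norm_num⟩ 1 ⟨zero_le_one, le_rfl⟩ t ⟨ht0.le, ht1⟩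
    rw [hφ.map_one, hφ.normalized, mul_zero, add_zero, mul_one, mul_one,
      show t * (1 / 2) + (1 - t) = 1 - t / 2 by ring] at h
    exact h.trans_lt hts
  refine (pseudoInv_le_of_forall (fun w hw hsw => ?_) (by linarith)).trans_lt
    (show 1 - t / 2 < 1 by linarith)
  by_contra! hlt
  exact (hsw.trans (hφ.strictAntiOn ⟨by linarith, by linarith⟩ hw hlt).le).not_gt hφt

lemma tendsto_pseudoInv {φseq : ℕ → ℝ → ℝ≥0∞} (hφ : IsGenerator φ)
    (hφseq : ∀ n, IsGenerator (φseq n))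
    (hconv : ∀ x ∈ Ioc (0 : ℝ) 1, Tendsto (fun n => φseq n x) atTop (𝓝 (φ x)))
    {ss : ℕ → ℝ≥0∞} (hss : Tendsto ss atTop (𝓝 s)) (hc : pseudoInv φ s ∈ Ioo 0 1) :
    Tendsto (fun n => pseudoInv (φseq n) (ss n)) atTop (𝓝 (pseudoInv φ s)) := by
  rw [tendsto_order]
  constructor
  · intro b hb
    obtain ⟨z, hbz, hzc⟩ := exists_between (max_lt hb hc.1)
    obtain ⟨z', hzz', hz'c⟩ := exists_between hzc
    have hz : z ∈ Ioc 0 1 := ⟨(le_max_right b 0).trans_lt hbz, (hzc.trans hc.2).le⟩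
    have hsz : s < φ z := (hφ.le_apply_of_lt_pseudoInv (hz.1.trans hzz').le hz'c).trans_lt
      (hφ.strictAntiOn (Ioc_subset_Icc_self hz) ⟨(hz.1.trans hzz').le, (hz'c.trans hc.2).le⟩ hzz')
    filter_upwards [hss.eventually_lt (hconv z hz) hsz] with n hn
    exact ((le_max_left b 0).trans_lt hbz).trans_le (le_pseudoInv (Ioc_subset_Icc_self hz) hn.le)
  · intro b hb
    obtain ⟨z, hcz, hzb⟩ := exists_between (lt_min hb hc.2)
    have hz : z ∈ Ioc 0 1 := ⟨hc.1.trans hcz, (hzb.trans_le (min_le_right b 1)).le⟩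
    have hzs : φ z < s := apply_lt_of_pseudoInv_lt (Ioc_subset_Icc_self hz) hcz
    filter_upwards [(hconv z hz).eventually_lt hss hzs] with n hn
    refine (pseudoInv_le_of_forall (fun w hw hsw => ?_) hz.1.le).trans_lt
      (hzb.trans_le (min_le_left b 1))
    by_contra! hzw
    exact (hsw.trans ((hφseq n).strictAntiOn (Ioc_subset_Icc_self hz) hw hzw).le).not_gt hn

end IsGenerator

section ArchCopula

variable {φ : ℝ → ℝ≥0∞} {φseq : ℕ → ℝ → ℝ≥0∞} {x y : ℝ}

lemma archCopula_comm (φ : ℝ → ℝ≥0∞) (x y : ℝ) : archCopula φ x y = archCopula φ y x := by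
  rw [archCopula, archCopula, add_comm]

lemma archKernel_eq_div (hx : x ∈ Ioo 0 1) (hy : levelFn φ 0 x ≤ y) :
    archKernel φ x y = Dplus φ x / Dplus φ (archCopula φ x y) := by
  simp only [archKernel, hx.1.ne', hx.2.ne, or_self, if_false, not_lt.2 hy]

namespace IsGenerator

lemma archCopula_le_left (hφ : IsGenerator φ) (hx : x ∈ Icc 0 1) : archCopula φ x y ≤ x :=
  pseudoInv_le_of_forall (fun _ hz h => le_of_not_gt fun hxz =>
    (hφ.strictAntiOn hx hz hxz).not_ge (le_self_add.trans h)) hx.1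

lemma levelFn_le_of_archCopula_pos (hφ : IsGenerator φ) (hy0 : 0 ≤ y)
    (h : 0 < archCopula φ x y) : levelFn φ 0 x ≤ y := by
  refine le_of_not_gt fun hy => h.not_ge (pseudoInv_le_of_forall (fun z hz hsz => ?_) le_rfl)
  have h0 : φ 0 ≤ φ x + φ y := tsub_le_iff_left.1 (hφ.le_apply_of_lt_pseudoInv hy0 hy)
  exact le_of_not_gt fun hz0 =>
    (hφ.strictAntiOn ⟨le_rfl, zero_le_one⟩ hz hz0).not_ge (h0.trans hsz)

lemma archCopula_pos (hφ : IsGenerator φ) (hx : x ∈ Ioc 0 1) (hy : y ∈ Ioc (levelFn φ 0 x) 1) :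
    0 < archCopula φ x y := by
  have hy0 : 0 ≤ y := pseudoInv_nonneg.trans hy.1.le
  have hs : φ x + φ y < φ 0 :=
    calc φ x + φ y < φ x + (φ 0 - φ x) :=
          ENNReal.add_lt_add_left (hφ.ne_top hx) (apply_lt_of_pseudoInv_lt ⟨hy0, hy.2⟩ hy.1)
      _ = φ 0 := add_tsub_cancel_of_le (hφ.strictAntiOn.antitoneOn ⟨le_rfl, zero_le_one⟩
          (Ioc_subset_Icc_self hx) hx.1.le)
  obtain ⟨z, hsz, hz⟩ :=
    ((hφ.rightCont_zero.eventually_const_lt hs).and (Ioo_mem_nhdsGT one_pos)).exists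
  exact hz.1.trans_le (le_pseudoInv ⟨hz.1.le, hz.2.le⟩ hsz.le)

lemma levelFn_lt_one (hφ : IsGenerator φ) (hx : x ∈ Ioo 0 1) : levelFn φ 0 x < 1 :=
  hφ.pseudoInv_lt_one <| tsub_pos_of_lt <|
    hφ.strictAntiOn ⟨le_rfl, zero_le_one⟩ (Ioo_subset_Icc_self hx) hx.1

lemma injOn_archCopula (hφ : IsGenerator φ) (hx : x ∈ Ioc 0 1) :
    InjOn (archCopula φ x) {y | y ∈ Icc 0 1 ∧ archCopula φ x y ∈ Ioo 0 1} := by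
  intro y₁ h₁ y₂ h₂ heq
  have h : φ x + φ y₁ = φ x + φ y₂ :=
    (hφ.apply_pseudoInv h₁.2).symm.trans ((congrArg φ heq).trans (hφ.apply_pseudoInv h₂.2))
  exact hφ.strictAntiOn.injOn h₁.1 h₂.1 ((ENNReal.add_right_inj (hφ.ne_top hx)).1 h)

lemma countable_Icc_levelFn_diff (hφ : IsGenerator φ) (hx : x ∈ Ioo 0 1) :
    (Icc (levelFn φ 0 x) 1 \
      {y | y ∈ Icc (levelFn φ 0 x) 1 ∧ archCopula φ x y ∈ ContD φ}).Countable := by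
  have hbad : {y | y ∈ Icc 0 1 ∧ archCopula φ x y ∈ Ioo 0 1 \ ContD φ}.Countable := by
    refine MapsTo.countable_of_injOn (fun y hy => hy.2)
      ((hφ.injOn_archCopula (Ioo_subset_Ioc_self hx)).mono ?_) hφ.countable_Ioo_diff_ContD
    exact fun _ hy => ⟨hy.1, hy.2.1⟩
  refine ((countable_singleton (levelFn φ 0 x)).union hbad).mono ?_
  rintro y ⟨hy, hyU⟩
  rcases hy.1.eq_or_lt with hya | hya
  · exact Or.inl hya.symm
  have hC : archCopula φ x y ∈ Ioo 0 1 :=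
    ⟨hφ.archCopula_pos (Ioo_subset_Ioc_self hx) ⟨hya, hy.2⟩,
      (hφ.archCopula_le_left (Ioo_subset_Icc_self hx)).trans_lt hx.2⟩
  exact Or.inr ⟨⟨pseudoInv_nonneg.trans hy.1, hy.2⟩, hC, fun h => hyU ⟨hy, h⟩⟩

lemma tendsto_archCopula (hφ : IsGenerator φ) (hφseq : ∀ n, IsGenerator (φseq n))
    (hconv : ∀ x ∈ Ioc (0 : ℝ) 1, Tendsto (fun n => φseq n x) atTop (𝓝 (φ x)))
    (hx : x ∈ Ioc 0 1) (hy : y ∈ Icc 0 1) (hc : archCopula φ x y ∈ Ioo 0 1) :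
    Tendsto (fun n => archCopula (φseq n) x y) atTop (𝓝 (archCopula φ x y)) := by
  have hy0 : 0 < y := hc.1.trans_le ((archCopula_comm φ x y).trans_le (hφ.archCopula_le_left hy))
  exact hφ.tendsto_pseudoInv hφseq hconv ((hconv x hx).add (hconv y ⟨hy0, hy.2⟩)) hc

lemma tendsto_Dplus (hφ : IsGenerator φ) (hφseq : ∀ n, IsGenerator (φseq n))
    (hconv : ∀ x ∈ Ioc (0 : ℝ) 1, Tendsto (fun n => φseq n x) atTop (𝓝 (φ x)))
    {c : ℝ} (hc : c ∈ ContD φ) {t : ℕ → ℝ} (ht : Tendsto t atTop (𝓝 c)) :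
    Tendsto (fun n => Dplus (φseq n) (t n)) atTop (𝓝 (Dplus φ c)) :=
  tendsto_rightD_of_tendsto (fun n => (hφseq n).convexOn_toReal) hφ.convexOn_toReal
    (fun u hu => (ENNReal.tendsto_toReal (hφ.ne_top hu)).comp (hconv u hu)) hc.1 hc.2 ht

theorem tendsto_Dplus_div_Dplus_archCopula (hφ : IsGenerator φ) (hφseq : ∀ n, IsGenerator (φseq n))
    (hconv : ∀ x ∈ Ioc (0 : ℝ) 1, Tendsto (fun n => φseq n x) atTop (𝓝 (φ x)))
    (hx : x ∈ ContD φ) (hy : y ∈ Icc 0 1) (hc : archCopula φ x y ∈ ContD φ) :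
    Tendsto (fun n => Dplus (φseq n) x / Dplus (φseq n) (archCopula (φseq n) x y)) atTop
      (𝓝 (Dplus φ x / Dplus φ (archCopula φ x y))) :=
  (hφ.tendsto_Dplus hφseq hconv hx tendsto_const_nhds).div
    (hφ.tendsto_Dplus hφseq hconv hc
      (hφ.tendsto_archCopula hφseq hconv (Ioo_subset_Ioc_self hx.1) hy hc.1))
    (hφ.Dplus_neg hc.1).ne

theorem tendsto_archKernel (hφ : IsGenerator φ) (hφseq : ∀ n, IsGenerator (φseq n))
    (hconv : ∀ x ∈ Ioc (0 : ℝ) 1, Tendsto (fun n => φseq n x) atTop (𝓝 (φ x)))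
    (hx : x ∈ ContD φ) (hy : y ∈ Icc (levelFn φ 0 x) 1) (hc : archCopula φ x y ∈ ContD φ) :
    Tendsto (fun n => archKernel (φseq n) x y) atTop (𝓝 (archKernel φ x y)) := by
  have hy0 : 0 ≤ y := pseudoInv_nonneg.trans hy.1
  rw [archKernel_eq_div hx.1 hy.1]
  refine (hφ.tendsto_Dplus_div_Dplus_archCopula hφseq hconv hx ⟨hy0, hy.2⟩ hc).congr' ?_
  filter_upwards [(hφ.tendsto_archCopula hφseq hconv (Ioo_subset_Ioc_self hx.1) ⟨hy0, hy.2⟩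
    hc.1).eventually_const_lt hc.1.1] with n hn
  rw [archKernel_eq_div hx.1 ((hφseq n).levelFn_le_of_archCopula_pos hy0 hn)]

end IsGenerator

end ArchCopula

lemma Icc_subset_closure_of_countable_diff {a b : ℝ} {s : Set ℝ} (hab : a < b)
    (hs : (Icc a b \ s).Countable) : Icc a b ⊆ closure s := by
  rw [← closure_Ioo hab.ne]
  refine closure_minimal ((hs.dense_compl ℝ).open_subset_closure_inter isOpen_Ioo) isClosed_closure
    |>.trans (closure_mono ?_)
  rintro y ⟨hy, hys⟩
  by_contra h
  exact hys ⟨Ioo_subset_Icc_self hy, h⟩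

/-- For Archimedean copulas whose generators converge pointwise on
`(0,1]`: for every `x ∈ Cont(D⁺φ)` and every `y ∈ [f⁰(x),1]` with `C(x,y) ∈ Cont(D⁺φ)` the
Markov kernels converge, `K_{C_n}(x,[0,y]) → K_C(x,[0,y])`, that is,
`D⁺φ_n(x)/D⁺φ_n(C_n(x,y)) → D⁺φ(x)/D⁺φ(C(x,y))`; moreover for every `x ∈ (0,1)` the set
`U_x = {y ∈ [f⁰(x),1] : C(x,y) ∈ Cont(D⁺φ)}` has full Lebesgue measure in, and is dense
in, `[f⁰(x),1]`. -/
theorem stmt9 (φ : ℝ → ℝ≥0∞) (φseq : ℕ → ℝ → ℝ≥0∞)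
    (hφ : IsGenerator φ) (hφseq : ∀ n, IsGenerator (φseq n))
    (hconv : ∀ x ∈ Set.Ioc (0:ℝ) 1,
      Filter.Tendsto (fun n => φseq n x) Filter.atTop (nhds (φ x))) :
    (∀ x ∈ ContD φ, ∀ y ∈ Set.Icc (levelFn φ 0 x) 1, archCopula φ x y ∈ ContD φ →
      Filter.Tendsto (fun n => archKernel (φseq n) x y) Filter.atTop
          (nhds (archKernel φ x y)) ∧
        Filter.Tendsto
          (fun n => Dplus (φseq n) x / Dplus (φseq n) (archCopula (φseq n) x y))
          Filter.atTop (nhds (Dplus φ x / Dplus φ (archCopula φ x y)))) ∧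
    (∀ x ∈ Set.Ioo (0:ℝ) 1,
      volume {y | y ∈ Set.Icc (levelFn φ 0 x) 1 ∧ archCopula φ x y ∈ ContD φ} =
          volume (Set.Icc (levelFn φ 0 x) 1) ∧
        Set.Icc (levelFn φ 0 x) 1 ⊆
          closure {y | y ∈ Set.Icc (levelFn φ 0 x) 1 ∧ archCopula φ x y ∈ ContD φ}) := by
  refine ⟨fun x hx y hy hc => ⟨hφ.tendsto_archKernel hφseq hconv hx hy hc,
    hφ.tendsto_Dplus_div_Dplus_archCopula hφseq hconv hx ⟨pseudoInv_nonneg.trans hy.1, hy.2⟩ hc⟩,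
    fun x hx => ?_⟩
  have hcount := hφ.countable_Icc_levelFn_diff hx
  exact ⟨measure_eq_measure_of_null_sdiff (fun y hy => hy.1) (hcount.measure_zero _),
    Icc_subset_closure_of_countable_diff (hφ.levelFn_lt_one hx) hcount⟩
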